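/- (Difference-form lower bound.) For every w ∈ W = {w : w > 1 on T\{0}, w_0 = ∞} with R(w) > 0 on T\{0}, one has inf_{i∈T\{0}} R_i(w) ≤ λ_0. Hence sup_{w∈W} inf_{i∈T\{0}} R_i(w) ≤ λ_0 and, combined with the converse inequality, sup_{w∈W} inf_{i∈T\{0}} R_i(w) = λ_0. -/

import Mathlib

open Finset
open scoped Classical

structure BDTree (V : Type*) [Fintype V] where
  root : V
  parent : V → V
  layer : V → ℕ
  q : V → V → ℝ
  parent_root : parent root = root
  layer_root : layer root = 0
  layer_parent : ∀ i, i ≠ root → layer i = layer (parent i) + 1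
  reach : ∀ i, ∃ n, parent^[n] i = root
  q_pos_up : ∀ i, i ≠ root → 0 < q i (parent i)
  q_pos_down : ∀ i, i ≠ root → 0 < q (parent i) i

namespace BDTree

variable {V : Type*} [Fintype V] (T : BDTree V)

/-- The set of sons of a vertex. -/
noncomputable def sons (i : V) : Finset V :=
  Finset.univ.filter fun j => j ≠ T.root ∧ T.parent j = i

/-- The subtree `T_k` rooted at `k` (including `k`). -/
noncomputable def subtree (k : V) : Finset V :=
  Finset.univ.filter fun j => ∃ n, T.parent^[n] j = k

/-- The path set `P(i)`: vertices (excluding the root) on the path from `i` to the root. -/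
noncomputable def pathSet (i : V) : Finset V :=
  Finset.univ.filter fun k => k ≠ T.root ∧ ∃ n, T.parent^[n] i = k

/-- The symmetric measure `μ`. -/
noncomputable def mu (k : V) : ℝ :=
  ∏ j ∈ T.pathSet k, T.q (T.parent j) j / T.q j (T.parent j)

/-- The operator `Ω`. -/
noncomputable def Omega (g : V → ℝ) (i : V) : ℝ :=
  (∑ j ∈ T.sons i, T.q i j * (g j - g i)) + T.q i (T.parent i) * (g (T.parent i) - g i)

/-- The set of non-root vertices `T \ {0}`. -/
noncomputable def nonroot : Finset V := Finset.univ.filter fun i => i ≠ T.root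

/-- The Dirichlet form `D(f)`. -/
noncomputable def D (f : V → ℝ) : ℝ :=
  ∑ i ∈ T.nonroot, T.mu i * T.q i (T.parent i) * (f i - f (T.parent i)) ^ 2

/-- `μ(f²)`. -/
noncomputable def norm2 (f : V → ℝ) : ℝ := ∑ i ∈ T.nonroot, T.mu i * f i ^ 2

/-- The principal Dirichlet eigenvalue `λ₀`, via the classical variational formula. -/
noncomputable def lam0 : ℝ := sInf {r | ∃ f : V → ℝ, f T.root = 0 ∧ T.norm2 f = 1 ∧ r = T.D f}

/-- The single-summation operator `I`. -/
noncomputable def opI (f : V → ℝ) (i : V) : ℝ :=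
  (∑ j ∈ T.subtree i, T.mu j * f j) /
    (T.mu i * T.q i (T.parent i) * (f i - f (T.parent i)))

/-- The double-summation operator `II`. -/
noncomputable def opII (f : V → ℝ) (i : V) : ℝ :=
  (∑ k ∈ T.pathSet i, (1 / (T.mu k * T.q k (T.parent k))) *
      ∑ j ∈ T.subtree k, T.mu j * f j) / f i

/-- The difference-form operator `R`; at a son of the root the convention `w_0 = ∞`,
`1/∞ = 0` is used, i.e. the term `w i⁻¹` is replaced by `0`. -/
noncomputable def R (w : V → ℝ) (i : V) : ℝ :=
  T.q i (T.parent i) * (1 - (if T.parent i = T.root then 0 else (w i)⁻¹)) +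
    ∑ j ∈ T.sons i, T.q i j * (1 - w j)

/-- Membership in the test-function class `W = {w : w > 1, w_0 = ∞}` (the value at a son
of the root plays the role of `∞` and is not used by `R`). -/
def memW (w : V → ℝ) : Prop := ∀ i, i ≠ T.root → T.parent i ≠ T.root → 1 < w i

/-- `φ_j = Σ_{k∈P(j)} 1/(μ_k q_{kk*})`. -/
noncomputable def phi (j : V) : ℝ :=
  ∑ k ∈ T.pathSet j, 1 / (T.mu k * T.q k (T.parent k))

end BDTree

/-
For `w ∈ W` the path product `u_i = ∏_{k ∈ P(i)} w_k` vanishes at the root, is positive elsewhere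
and satisfies `-Ω u = R(w) u`. Barta's inequality then gives `inf R(w) · μ(f²) ≤ D(f)` whenever
`f_0 = 0`: by Green's formula `Σ μ_i (-Ω u)_i f_i² / u_i` is the energy pairing of `u` with
`f² / u`, which is edgewise at most `D(f)` because `(a - b)(x²/a - y²/b) ≤ (x - y)²`.

Conversely, on the subtree `T_a` below a son `a` of the root the Rayleigh quotient `D(f) / μ(f²)`
attains its minimum `λ_a ≥ λ₀` at some `g ≥ 0`. Testing the Euler–Lagrange equation against the
indicator of `T_i` shows that the flux `μ_i q_{ii*} (g_i - g_{i*})` equals `λ_a Σ_{j ∈ T_i} μ_j g_j`,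
so `g` is positive and strictly increasing away from the root. Gluing these ground states into `u`
and putting `w_i = u_i / u_{i*}` gives `w ∈ W` with `R(w) = λ_a ≥ λ₀` on each branch, so the
supremum is attained.
-/

lemma sub_mul_sub_div_le_sq {a b x y : ℝ} (ha : 0 < a) (hby : 0 < b ∨ b = 0 ∧ y = 0) :
    (a - b) * (x ^ 2 / a - y ^ 2 / b) ≤ (x - y) ^ 2 := by
  rcases hby with hb | ⟨rfl, rfl⟩
  · rw [← sub_nonneg]
    have hsq : (x - y) ^ 2 - (a - b) * (x ^ 2 / a - y ^ 2 / b) = (b * x - a * y) ^ 2 / (a * b) := by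
      field_simp
      ring
    rw [hsq]
    positivity
  · field_simp
    simp

namespace BDTree

variable {V : Type*} [Fintype V] (T : BDTree V)

section Structure

variable {T} {a b i j k : V}

@[simp] lemma mem_nonroot : i ∈ T.nonroot ↔ i ≠ T.root := by simp [nonroot]

lemma mem_sons : j ∈ T.sons i ↔ j ≠ T.root ∧ T.parent j = i := by simp [sons]

lemma mem_subtree : j ∈ T.subtree a ↔ ∃ n, T.parent^[n] j = a := by simp [subtree]

lemma mem_pathSet : k ∈ T.pathSet i ↔ k ≠ T.root ∧ ∃ n, T.parent^[n] i = k := by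
  simp [pathSet]

lemma iterate_parent_root (n : ℕ) : T.parent^[n] T.root = T.root :=
  Function.iterate_fixed T.parent_root n

lemma iterate_parent_succ_ne_self (hi : i ≠ T.root) (n : ℕ) : T.parent^[n + 1] i ≠ i := by
  intro h
  obtain ⟨m, hm⟩ := T.reach i
  have hper : T.parent^[m * (n + 1)] i = i := Function.IsPeriodicPt.const_mul h m
  have hroot : T.parent^[m * (n + 1)] i = T.root := by
    obtain ⟨k, hk⟩ := Nat.exists_eq_add_of_le (Nat.le_mul_of_pos_right m n.succ_pos)
    rw [hk, add_comm, Function.iterate_add_apply, hm, iterate_parent_root]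
  exact hi (hper.symm.trans hroot)

lemma self_mem_subtree (a : V) : a ∈ T.subtree a := mem_subtree.2 ⟨0, rfl⟩

lemma mem_subtree_root (i : V) : i ∈ T.subtree T.root := mem_subtree.2 (T.reach i)

lemma root_notMem_subtree (ha : a ≠ T.root) : T.root ∉ T.subtree a := by
  rw [mem_subtree]
  rintro ⟨n, hn⟩
  exact ha (hn.symm.trans (iterate_parent_root n))

lemma ne_root_of_mem_subtree (ha : a ≠ T.root) (hi : i ∈ T.subtree a) : i ≠ T.root := by
  rintro rfl
  exact root_notMem_subtree ha hi

lemma subtree_trans (hj : j ∈ T.subtree i) (hi : i ∈ T.subtree a) : j ∈ T.subtree a := by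
  obtain ⟨n, hn⟩ := mem_subtree.1 hj
  obtain ⟨m, hm⟩ := mem_subtree.1 hi
  exact mem_subtree.2 ⟨m + n, by rw [Function.iterate_add_apply, hn, hm]⟩

lemma mem_subtree_of_parent_mem (hi : T.parent i ∈ T.subtree a) : i ∈ T.subtree a :=
  subtree_trans (mem_subtree.2 ⟨1, rfl⟩) hi

lemma mem_subtree_of_mem_sons (hj : j ∈ T.sons i) (hi : i ∈ T.subtree a) : j ∈ T.subtree a :=
  mem_subtree_of_parent_mem ((mem_sons.1 hj).2 ▸ hi)

lemma parent_mem_subtree (hi : i ∈ T.subtree a) (hia : i ≠ a) : T.parent i ∈ T.subtree a := by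
  obtain ⟨_ | n, hn⟩ := mem_subtree.1 hi
  · exact absurd hn hia
  · exact mem_subtree.2 ⟨n, hn⟩

lemma parent_notMem_subtree_self (hi : i ≠ T.root) : T.parent i ∉ T.subtree i := by
  rw [mem_subtree]
  rintro ⟨n, hn⟩
  exact iterate_parent_succ_ne_self hi n hn

lemma parent_mem_insert_subtree (hi : i ∈ T.subtree a) :
    T.parent i ∈ insert (T.parent a) (T.subtree a) := by
  by_cases hia : i = a
  · exact hia ▸ mem_insert_self _ _
  · exact mem_insert_of_mem (parent_mem_subtree hi hia)

lemma subtree_induction {P : V → Prop} (ha : P a)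
    (hstep : ∀ i ∈ T.subtree a, i ≠ a → P (T.parent i) → P i) : ∀ i ∈ T.subtree a, P i := by
  suffices ∀ n i, T.parent^[n] i = a → P i from fun i hi ↦
    (mem_subtree.1 hi).elim fun n hn ↦ this n i hn
  intro n
  induction n with
  | zero => rintro i rfl; exact ha
  | succ n ih =>
    intro i hi
    by_cases hia : i = a
    · exact hia ▸ ha
    · exact hstep i (mem_subtree.2 ⟨n + 1, hi⟩) hia (ih _ hi)

lemma mem_subtree_or_mem_subtree (ha : i ∈ T.subtree a) (hb : i ∈ T.subtree b) :
    a ∈ T.subtree b ∨ b ∈ T.subtree a := by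
  obtain ⟨n, rfl⟩ := mem_subtree.1 ha
  obtain ⟨m, rfl⟩ := mem_subtree.1 hb
  rcases le_total n m with h | h
  · obtain ⟨k, rfl⟩ := Nat.exists_eq_add_of_le h
    exact Or.inl (mem_subtree.2 ⟨k, by rw [← Function.iterate_add_apply, add_comm]⟩)
  · obtain ⟨k, rfl⟩ := Nat.exists_eq_add_of_le h
    exact Or.inr (mem_subtree.2 ⟨k, by rw [← Function.iterate_add_apply, add_comm]⟩)

lemma notMem_subtree_of_mem_sons_root (ha : a ∈ T.sons T.root) (hb : b ∈ T.sons T.root)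
    (hab : a ≠ b) (hi : i ∈ T.subtree a) : i ∉ T.subtree b := by
  have hroot : ∀ {c d}, c ∈ T.sons T.root → d ∈ T.sons T.root → c ≠ d → c ∉ T.subtree d := by
    intro c d hc hd hcd hmem
    have := parent_mem_subtree hmem hcd
    rw [(mem_sons.1 hc).2] at this
    exact root_notMem_subtree (mem_sons.1 hd).1 this
  intro hib
  rcases mem_subtree_or_mem_subtree hi hib with h | h
  · exact hroot ha hb hab h
  · exact hroot hb ha (Ne.symm hab) h

lemma exists_mem_sons_root_mem_subtree (hi : i ≠ T.root) :
    ∃ a ∈ T.sons T.root, i ∈ T.subtree a := by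
  refine (subtree_induction (P := fun i ↦ i ≠ T.root → ∃ a ∈ T.sons T.root, i ∈ T.subtree a)
    (fun h ↦ absurd rfl h) ?_) i (mem_subtree_root i) hi
  intro i _ hi ih _
  by_cases hp : T.parent i = T.root
  · exact ⟨i, mem_sons.2 ⟨hi, hp⟩, self_mem_subtree i⟩
  · obtain ⟨a, ha, hpa⟩ := ih hp
    exact ⟨a, ha, mem_subtree_of_parent_mem hpa⟩

lemma pathSet_eq_insert (hi : i ≠ T.root) : T.pathSet i = insert i (T.pathSet (T.parent i)) := by
  ext k
  simp only [mem_pathSet, mem_insert]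
  constructor
  · rintro ⟨hk, _ | n, hn⟩
    · exact Or.inl hn.symm
    · exact Or.inr ⟨hk, n, hn⟩
  · rintro (rfl | ⟨hk, n, hn⟩)
    · exact ⟨hi, 0, rfl⟩
    · exact ⟨hk, n + 1, hn⟩

lemma notMem_pathSet_parent (hi : i ≠ T.root) : i ∉ T.pathSet (T.parent i) := by
  rw [mem_pathSet]
  rintro ⟨-, n, hn⟩
  exact iterate_parent_succ_ne_self hi n hn

end Structure

lemma mu_pos (k : V) : 0 < T.mu k :=
  prod_pos fun j hj ↦
    have hj := (mem_pathSet.1 hj).1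
    div_pos (T.q_pos_down j hj) (T.q_pos_up j hj)

lemma mu_mul_q_pos {i : V} (hi : i ≠ T.root) : 0 < T.mu i * T.q i (T.parent i) :=
  mul_pos (T.mu_pos i) (T.q_pos_up i hi)

lemma mu_mul_q_parent {i : V} (hi : i ≠ T.root) :
    T.mu i * T.q i (T.parent i) = T.mu (T.parent i) * T.q (T.parent i) i := by
  rw [mu, pathSet_eq_insert hi, prod_insert (notMem_pathSet_parent hi), ← mu]
  have := (T.q_pos_up i hi).ne'
  field_simp

noncomputable def flux (h : V → ℝ) (i : V) : ℝ :=
  T.mu i * T.q i (T.parent i) * (h i - h (T.parent i))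

noncomputable def energy (h f : V → ℝ) : ℝ :=
  ∑ i ∈ T.nonroot, T.flux h i * (f i - f (T.parent i))

noncomputable def inner (f g : V → ℝ) : ℝ :=
  ∑ i ∈ T.nonroot, T.mu i * f i * g i

lemma mu_mul_Omega (h : V → ℝ) (i : V) :
    T.mu i * T.Omega h i = ∑ j ∈ T.sons i, T.flux h j - T.flux h i := by
  have hsons : ∀ j ∈ T.sons i, T.mu i * (T.q i j * (h j - h i)) = T.flux h j := by
    intro j hj
    obtain ⟨hjr, rfl⟩ := mem_sons.1 hj
    rw [flux, T.mu_mul_q_parent hjr]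
    ring
  by_cases hi : i = T.root
  · subst hi
    simp only [Omega, flux, T.parent_root, sub_self, mul_zero, add_zero, sub_zero, mul_sum]
    exact sum_congr rfl hsons
  · rw [Omega, mul_add, mul_sum, sum_congr rfl hsons, flux]
    ring

lemma sum_nonroot_eq_sum_sum_sons (H : V → ℝ) :
    ∑ i ∈ T.nonroot, H i = ∑ k, ∑ i ∈ T.sons k, H i := by
  rw [← sum_biUnion]
  · congr 1
    ext j
    simp [mem_sons]
  · intro k _ l _ hkl
    exact disjoint_left.2 fun j hk hl ↦ hkl ((mem_sons.1 hk).2.symm.trans (mem_sons.1 hl).2)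

lemma inner_neg_Omega (h : V → ℝ) {f : V → ℝ} (hf : f T.root = 0) :
    T.inner (fun i ↦ -T.Omega h i) f = T.energy h f := by
  have hparent : ∑ i ∈ T.nonroot, T.flux h i * f (T.parent i) =
      ∑ k ∈ T.nonroot, f k * ∑ j ∈ T.sons k, T.flux h j := by
    have hsons : ∀ k, ∑ j ∈ T.sons k, T.flux h j * f (T.parent j) =
        f k * ∑ j ∈ T.sons k, T.flux h j := fun k ↦ by
      rw [mul_sum]
      exact sum_congr rfl fun j hj ↦ by rw [(mem_sons.1 hj).2, mul_comm]
    rw [sum_nonroot_eq_sum_sum_sons, sum_congr rfl fun k _ ↦ hsons k,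
      ← add_sum_erase _ _ (mem_univ T.root), hf, zero_mul, zero_add]
    exact sum_congr (by ext; simp) fun _ _ ↦ rfl
  have hOmega : ∀ i, T.mu i * -T.Omega h i * f i =
      T.flux h i * f i - f i * ∑ j ∈ T.sons i, T.flux h j := by
    intro i
    rw [mul_neg, T.mu_mul_Omega]
    ring
  simp only [inner, energy, hOmega, sum_sub_distrib, mul_sub, hparent]

lemma energy_subtree_indicator (h : V → ℝ) {i : V} (hi : i ≠ T.root) :
    T.energy h (fun j ↦ if j ∈ T.subtree i then 1 else 0) = T.flux h i := by
  have hdiff : ∀ k, k ≠ T.root → ((if k ∈ T.subtree i then (1 : ℝ) else 0) -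
      if T.parent k ∈ T.subtree i then 1 else 0) = if k = i then 1 else 0 := by
    intro k hk
    by_cases hki : k = i
    · subst hki
      simp [self_mem_subtree, parent_notMem_subtree_self hk]
    by_cases hk : k ∈ T.subtree i
    · simp [hk, parent_mem_subtree hk hki, hki]
    · simp [hk, hki, mt mem_subtree_of_parent_mem hk]
  rw [energy, sum_congr rfl fun k hk ↦ by rw [hdiff k (mem_nonroot.1 hk)]]
  simp [hi]

lemma mul_norm2_le_D {u : V → ℝ} {c : ℝ} (hu0 : u T.root = 0) (hu : ∀ i, i ≠ T.root → 0 < u i)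
    (hc : ∀ i, i ≠ T.root → c * u i ≤ -T.Omega u i) {f : V → ℝ} (hf : f T.root = 0) :
    c * T.norm2 f ≤ T.D f :=
  calc c * T.norm2 f
      ≤ T.inner (fun i ↦ -T.Omega u i) (fun i ↦ f i ^ 2 / u i) := by
        rw [norm2, mul_sum]
        refine sum_le_sum fun i hi ↦ ?_
        have hui := hu i (mem_nonroot.1 hi)
        calc c * (T.mu i * f i ^ 2) = T.mu i * (c * u i) * (f i ^ 2 / u i) := by
              field_simp
          _ ≤ T.mu i * -T.Omega u i * (f i ^ 2 / u i) := by
              gcongr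
              · exact (T.mu_pos i).le
              · exact hc i (mem_nonroot.1 hi)
    _ = T.energy u (fun i ↦ f i ^ 2 / u i) := T.inner_neg_Omega u (by simp [hf])
    _ ≤ T.D f := by
        rw [D, energy]
        refine sum_le_sum fun i hi ↦ ?_
        rw [flux, mul_assoc]
        have hi := mem_nonroot.1 hi
        gcongr
        · exact (T.mu_mul_q_pos hi).le
        · refine sub_mul_sub_div_le_sq (hu i hi) ?_
          by_cases hp : T.parent i = T.root
          · exact Or.inr ⟨hp ▸ hu0, hp ▸ hf⟩
          · exact Or.inl (hu _ hp)

lemma R_mul_eq_neg_Omega {u w : V → ℝ} (hu0 : u T.root = 0)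
    (hrel : ∀ j, j ≠ T.root → T.parent j ≠ T.root → u j = w j * u (T.parent j))
    {i : V} (hi : i ≠ T.root) (hui : u i ≠ 0) : T.R w i * u i = -T.Omega u i := by
  have hsons : ∀ j ∈ T.sons i, T.q i j * (1 - w j) * u i = -(T.q i j * (u j - u i)) := by
    intro j hj
    obtain ⟨hjr, rfl⟩ := mem_sons.1 hj
    rw [hrel j hjr hi]
    ring
  have hparent : (1 - if T.parent i = T.root then 0 else (w i)⁻¹) * u i = u i - u (T.parent i) := by
    by_cases hp : T.parent i = T.root
    · rw [if_pos hp, hp, hu0]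
      ring
    · have hwi : w i ≠ 0 := fun h ↦ hui (by rw [hrel i hi hp, h, zero_mul])
      rw [if_neg hp, hrel i hi hp]
      field_simp
  rw [R, Omega, add_mul, sum_mul, sum_congr rfl hsons, sum_neg_distrib, mul_assoc, hparent]
  ring

-- `w` stands for `∞` at the sons of the root (see `R`), so their factors are dropped; this only
-- rescales `u` on each branch.
noncomputable def pathProd (w : V → ℝ) (i : V) : ℝ :=
  if i = T.root then 0 else ∏ k ∈ (T.pathSet i).filter (fun k ↦ T.parent k ≠ T.root), w k

lemma pathProd_pos {w : V → ℝ} (hw : T.memW w) {i : V} (hi : i ≠ T.root) :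
    0 < T.pathProd w i := by
  rw [pathProd, if_neg hi]
  refine prod_pos fun k hk ↦ ?_
  obtain ⟨hk, hpk⟩ := mem_filter.1 hk
  exact one_pos.trans (hw k (mem_pathSet.1 hk).1 hpk)

lemma pathProd_eq_mul (w : V → ℝ) {j : V} (hj : j ≠ T.root) (hpj : T.parent j ≠ T.root) :
    T.pathProd w j = w j * T.pathProd w (T.parent j) := by
  have hnot : j ∉ (T.pathSet (T.parent j)).filter (fun k ↦ T.parent k ≠ T.root) :=
    fun h ↦ notMem_pathSet_parent hj (mem_filter.1 h).1
  rw [pathProd, pathProd, if_neg hj, if_neg hpj, pathSet_eq_insert hj, filter_insert,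
    if_pos hpj, prod_insert hnot]

lemma exists_norm2_eq_one {i : V} (hi : i ≠ T.root) :
    ∃ f : V → ℝ, (∀ j, j ≠ i → f j = 0) ∧ T.norm2 f = 1 := by
  refine ⟨Pi.single i (√(T.mu i))⁻¹, fun j hj ↦ Pi.single_eq_of_ne hj _, ?_⟩
  rw [norm2, sum_eq_single_of_mem i (mem_nonroot.2 hi) fun j _ hj ↦ by simp [hj]]
  rw [Pi.single_eq_same, inv_pow, Real.sq_sqrt (T.mu_pos i).le, mul_inv_cancel₀ (T.mu_pos i).ne']

lemma inf'_R_le_lam0 (hne : T.nonroot.Nonempty) {w : V → ℝ} (hw : T.memW w) :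
    T.nonroot.inf' hne (T.R w) ≤ T.lam0 := by
  obtain ⟨i₀, hi₀⟩ := id hne
  obtain ⟨f₀, hf₀, hf₀n⟩ := T.exists_norm2_eq_one (mem_nonroot.1 hi₀)
  refine le_csInf ⟨_, f₀, hf₀ _ (mem_nonroot.1 hi₀).symm, hf₀n, rfl⟩ ?_
  rintro _ ⟨f, hf0, hf1, rfl⟩
  have hu0 : T.pathProd w T.root = 0 := if_pos rfl
  have hsuper : ∀ i, i ≠ T.root →
      T.nonroot.inf' hne (T.R w) * T.pathProd w i ≤ -T.Omega (T.pathProd w) i := by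
    intro i hi
    rw [← T.R_mul_eq_neg_Omega hu0 (fun j ↦ T.pathProd_eq_mul w) hi (T.pathProd_pos hw hi).ne']
    exact mul_le_mul_of_nonneg_right (inf'_le _ (mem_nonroot.2 hi)) (T.pathProd_pos hw hi).le
  simpa [hf1] using T.mul_norm2_le_D hu0 (fun i ↦ T.pathProd_pos hw) hsuper hf0

lemma D_nonneg (f : V → ℝ) : 0 ≤ T.D f :=
  sum_nonneg fun _ hi ↦ mul_nonneg (T.mu_mul_q_pos (mem_nonroot.1 hi)).le (sq_nonneg _)

lemma norm2_nonneg (f : V → ℝ) : 0 ≤ T.norm2 f :=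
  sum_nonneg fun i _ ↦ mul_nonneg (T.mu_pos i).le (sq_nonneg _)

lemma lam0_le_D {f : V → ℝ} (hf0 : f T.root = 0) (hf1 : T.norm2 f = 1) : T.lam0 ≤ T.D f :=
  csInf_le ⟨0, by rintro _ ⟨g, -, -, rfl⟩; exact T.D_nonneg g⟩ ⟨f, hf0, hf1, rfl⟩

lemma D_pos {f : V → ℝ} (hf0 : f T.root = 0) (hf : T.norm2 f ≠ 0) : 0 < T.D f := by
  refine (T.D_nonneg f).lt_of_ne fun hD ↦ hf ?_
  have hedge : ∀ i, i ≠ T.root → f i = f (T.parent i) := by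
    intro i hi
    have := (sum_eq_zero_iff_of_nonneg fun j hj ↦ mul_nonneg
      (T.mu_mul_q_pos (mem_nonroot.1 hj)).le (sq_nonneg _)).1 hD.symm i (mem_nonroot.2 hi)
    simpa [(T.mu_mul_q_pos hi).ne', sub_eq_zero] using this
  have hzero : ∀ i ∈ T.subtree T.root, f i = 0 :=
    subtree_induction hf0 fun i _ hi hp ↦ (hedge i hi).trans hp
  simp [norm2, hzero _ (mem_subtree_root _)]

lemma D_add_smul (g e : V → ℝ) (t : ℝ) :
    T.D (g + t • e) = T.D g + 2 * t * T.energy g e + t ^ 2 * T.D e := by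
  simp only [D, energy, flux, mul_sum, ← sum_add_distrib]
  exact sum_congr rfl fun _ _ ↦ by simp only [Pi.add_apply, Pi.smul_apply, smul_eq_mul]; ring

lemma norm2_add_smul (g e : V → ℝ) (t : ℝ) :
    T.norm2 (g + t • e) = T.norm2 g + 2 * t * T.inner g e + t ^ 2 * T.norm2 e := by
  simp only [norm2, inner, mul_sum, ← sum_add_distrib]
  exact sum_congr rfl fun _ _ ↦ by simp only [Pi.add_apply, Pi.smul_apply, smul_eq_mul]; ring

lemma D_smul (c : ℝ) (f : V → ℝ) : T.D (c • f) = c ^ 2 * T.D f := by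
  simp only [D, mul_sum, Pi.smul_apply, smul_eq_mul]
  exact sum_congr rfl fun _ _ ↦ by ring

lemma norm2_smul (c : ℝ) (f : V → ℝ) : T.norm2 (c • f) = c ^ 2 * T.norm2 f := by
  simp only [norm2, mul_sum, Pi.smul_apply, smul_eq_mul]
  exact sum_congr rfl fun _ _ ↦ by ring

lemma D_abs_le (f : V → ℝ) : T.D (fun i ↦ |f i|) ≤ T.D f :=
  sum_le_sum fun i hi ↦ mul_le_mul_of_nonneg_left
    (sq_le_sq.2 (by simpa using abs_abs_sub_abs_le_abs_sub (f i) (f (T.parent i))))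
    (T.mu_mul_q_pos (mem_nonroot.1 hi)).le

lemma norm2_abs (f : V → ℝ) : T.norm2 (fun i ↦ |f i|) = T.norm2 f := by
  simp [norm2, sq_abs]

def sphereOn (S : Finset V) : Set (V → ℝ) := {f | (∀ i ∉ S, f i = 0) ∧ T.norm2 f = 1}

lemma isCompact_sphereOn {S : Finset V} (hS : T.root ∉ S) : IsCompact (T.sphereOn S) := by
  have hclosed : IsClosed (T.sphereOn S) := by
    unfold sphereOn
    rw [Set.ofPred_and]
    refine IsClosed.inter ?_ (isClosed_eq (by unfold norm2; fun_prop) continuous_const)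
    simp only [Set.ofPred_forall]
    exact isClosed_iInter fun i ↦ isClosed_iInter fun _ ↦
      isClosed_eq (continuous_apply i) continuous_const
  refine (isCompact_univ_pi fun i ↦ isCompact_Icc (a := -√(T.mu i)⁻¹) (b := √(T.mu i)⁻¹))
    |>.of_isClosed_subset hclosed fun f ⟨hsupp, hf1⟩ i _ ↦ ?_
  by_cases hi : i ∈ S
  · have hi' : i ∈ T.nonroot := mem_nonroot.2 fun h ↦ hS (h ▸ hi)
    have hterm : T.mu i * f i ^ 2 ≤ 1 := hf1 ▸
      single_le_sum (f := fun j ↦ T.mu j * f j ^ 2)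
        (fun j _ ↦ mul_nonneg (T.mu_pos j).le (sq_nonneg _)) hi'
    refine abs_le.1 (Real.abs_le_sqrt ?_)
    rw [← one_div, le_div_iff₀ (T.mu_pos i), mul_comm]
    exact hterm
  · rw [hsupp i hi]
    exact ⟨by simp, by positivity⟩

lemma exists_nonneg_isMinOn {S : Finset V} (hS : T.root ∉ S) {a : V} (ha : a ∈ S) :
    ∃ g ∈ T.sphereOn S, IsMinOn T.D (T.sphereOn S) g ∧ 0 ≤ g := by
  have ha' : a ≠ T.root := fun h ↦ hS (h ▸ ha)
  obtain ⟨f, hfa, hf1⟩ := T.exists_norm2_eq_one ha'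
  have hne : (T.sphereOn S).Nonempty := ⟨f, fun i hi ↦ hfa i (fun h ↦ hi (h ▸ ha)), hf1⟩
  obtain ⟨g, ⟨hgS, hg1⟩, hmin⟩ :=
    (T.isCompact_sphereOn hS).exists_isMinOn hne
      (show Continuous T.D by unfold D; fun_prop).continuousOn
  refine ⟨fun i ↦ |g i|, ⟨fun i hi ↦ by simp [hgS i hi], (T.norm2_abs g).trans hg1⟩,
    fun f hf ↦ (T.D_abs_le g).trans (hmin hf), fun i ↦ abs_nonneg (g i)⟩

section Minimizer

variable {T} {S : Finset V} {g : V → ℝ}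

lemma mul_norm2_le_D_of_isMinOn (hmin : IsMinOn T.D (T.sphereOn S) g) {f : V → ℝ}
    (hf : ∀ i ∉ S, f i = 0) :
    T.D g * T.norm2 f ≤ T.D f := by
  rcases (T.norm2_nonneg f).eq_or_lt with hn | hn
  · rw [← hn, mul_zero]
    exact T.D_nonneg f
  set c := (√(T.norm2 f))⁻¹
  have hc : c ^ 2 = (T.norm2 f)⁻¹ := by rw [inv_pow, Real.sq_sqrt hn.le]
  have hcf : c • f ∈ T.sphereOn S :=
    ⟨fun i hi ↦ by simp [hf i hi], by rw [norm2_smul, hc, inv_mul_cancel₀ hn.ne']⟩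
  have := hmin hcf
  rwa [Set.mem_ofPred_eq, D_smul, hc, inv_mul_eq_div, le_div_iff₀ hn] at this

lemma energy_eq_mul_inner_of_isMinOn (hg : g ∈ T.sphereOn S) (hmin : IsMinOn T.D (T.sphereOn S) g)
    {e : V → ℝ} (he : ∀ i ∉ S, e i = 0) :
    T.energy g e = T.D g * T.inner g e := by
  have hquad : ∀ t : ℝ, 0 ≤ (T.D e - T.D g * T.norm2 e) * (t * t) +
      2 * (T.energy g e - T.D g * T.inner g e) * t + 0 := by
    intro t
    have := mul_norm2_le_D_of_isMinOn hmin (f := g + t • e)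
      fun i hi ↦ by simp [hg.1 i hi, he i hi]
    rw [D_add_smul, norm2_add_smul, hg.2] at this
    linarith
  have := discrim_le_zero hquad
  rw [discrim, mul_zero, sub_zero] at this
  linarith [pow_eq_zero_iff two_ne_zero |>.1 (le_antisymm this (sq_nonneg _))]

lemma neg_Omega_eq_of_isMinOn (hg : g ∈ T.sphereOn S) (hmin : IsMinOn T.D (T.sphereOn S) g)
    (hS : T.root ∉ S) {i : V} (hi : i ∈ S) :
    -T.Omega g i = T.D g * g i := by
  have hi' : i ∈ T.nonroot := mem_nonroot.2 fun h ↦ hS (h ▸ hi)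
  have hinner : ∀ f : V → ℝ, T.inner f (Pi.single i 1) = T.mu i * f i := fun f ↦ by
    rw [inner, sum_eq_single_of_mem i hi' fun j _ hj ↦ by simp [hj]]
    simp
  have := energy_eq_mul_inner_of_isMinOn hg hmin (e := Pi.single i 1)
    fun j hj ↦ Pi.single_eq_of_ne (ne_of_mem_of_not_mem hi hj).symm _
  rw [← T.inner_neg_Omega g (Pi.single_eq_of_ne (ne_of_mem_of_not_mem hi hS).symm _), hinner,
    hinner] at this
  exact mul_left_cancel₀ (T.mu_pos i).ne' (by rw [this]; ring)

lemma flux_eq_of_isMinOn (hg : g ∈ T.sphereOn S) (hmin : IsMinOn T.D (T.sphereOn S) g)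
    (hS : T.root ∉ S) {i : V} (hsub : T.subtree i ⊆ S) :
    T.flux g i = T.D g * ∑ j ∈ T.subtree i, T.mu j * g j := by
  have hi : i ≠ T.root := fun h ↦ hS (hsub (h ▸ self_mem_subtree i))
  have := energy_eq_mul_inner_of_isMinOn hg hmin (e := fun j ↦ if j ∈ T.subtree i then 1 else 0)
    fun j hj ↦ if_neg fun h ↦ hj (hsub h)
  rw [T.energy_subtree_indicator g hi] at this
  rw [this, inner]
  simp only [mul_ite, mul_one, mul_zero, sum_ite_mem]
  congr 2
  exact inter_eq_right.2 fun j hj ↦ mem_nonroot.2 (ne_root_of_mem_subtree hi hj)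

end Minimizer

lemma flux_pos_iff {h : V → ℝ} {i : V} (hi : i ≠ T.root) :
    0 < T.flux h i ↔ h (T.parent i) < h i := by
  rw [flux, mul_pos_iff_of_pos_left (T.mu_mul_q_pos hi), sub_pos]

lemma flux_nonneg_iff {h : V → ℝ} {i : V} (hi : i ≠ T.root) :
    0 ≤ T.flux h i ↔ h (T.parent i) ≤ h i := by
  rw [flux, mul_nonneg_iff_of_pos_left (T.mu_mul_q_pos hi), sub_nonneg]

lemma exists_pos_eigenfunction_subtree {a : V} (ha : a ≠ T.root) :
    ∃ (lam : ℝ) (g : V → ℝ), T.lam0 ≤ lam ∧ (∀ i ∉ T.subtree a, g i = 0) ∧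
      ∀ i ∈ T.subtree a, 0 < g i ∧ g (T.parent i) < g i ∧ -T.Omega g i = lam * g i := by
  have hS := root_notMem_subtree ha
  obtain ⟨g, hg, hmin, hg0⟩ := T.exists_nonneg_isMinOn hS (self_mem_subtree a)
  have hgroot : g T.root = 0 := hg.1 _ hS
  have hlam : 0 < T.D g := T.D_pos hgroot (by rw [hg.2]; exact one_ne_zero)
  have hflux : ∀ i ∈ T.subtree a, T.flux g i = T.D g * ∑ j ∈ T.subtree i, T.mu j * g j :=
    fun i hi ↦ flux_eq_of_isMinOn hg hmin hS fun j hj ↦ subtree_trans hj hi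
  have hterm_nonneg : ∀ j, 0 ≤ T.mu j * g j := fun j ↦ mul_nonneg (T.mu_pos j).le (hg0 j)
  have hmass : 0 < ∑ j ∈ T.subtree a, T.mu j * g j := by
    refine (sum_nonneg fun j _ ↦ hterm_nonneg j).lt_of_ne fun h ↦ ?_
    have hzero : ∀ j, g j = 0 := fun j ↦ by
      by_cases hj : j ∈ T.subtree a
      · exact (mul_eq_zero.1 ((sum_eq_zero_iff_of_nonneg fun j _ ↦ hterm_nonneg j).1 h.symm j hj))
          |>.resolve_left (T.mu_pos j).ne'
      · exact hg.1 j hj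
    simpa [norm2, hzero] using hg.2
  have hga : 0 < g a := by
    have := (T.flux_pos_iff ha).1 (hflux a (self_mem_subtree a) ▸ mul_pos hlam hmass)
    rwa [hg.1 _ (parent_notMem_subtree_self ha)] at this
  have hmono : ∀ i ∈ T.subtree a, g (T.parent i) ≤ g i := fun i hi ↦
    (T.flux_nonneg_iff (ne_root_of_mem_subtree ha hi)).1
      (hflux i hi ▸ mul_nonneg hlam.le (sum_nonneg fun j _ ↦ hterm_nonneg j))
  have hpos : ∀ i ∈ T.subtree a, 0 < g i :=
    subtree_induction hga fun i hi _ hp ↦ hp.trans_le (hmono i hi)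
  refine ⟨T.D g, g, T.lam0_le_D hgroot hg.2, hg.1, fun i hi ↦
    ⟨hpos i hi, (T.flux_pos_iff (ne_root_of_mem_subtree ha hi)).1 ?_,
      neg_Omega_eq_of_isMinOn hg hmin hS hi⟩⟩
  rw [hflux i hi]
  refine mul_pos hlam ((mul_pos (T.mu_pos i) (hpos i hi)).trans_le ?_)
  exact single_le_sum (f := fun j ↦ T.mu j * g j) (fun j _ ↦ hterm_nonneg j) (self_mem_subtree i)

lemma Omega_congr_subtree {f f' : V → ℝ} {a i : V} (hi : i ∈ T.subtree a)
    (h : ∀ j ∈ insert (T.parent a) (T.subtree a), f j = f' j) : T.Omega f i = T.Omega f' i := by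
  have hsons : ∀ j ∈ T.sons i, f j = f' j := fun j hj ↦
    h j (mem_insert_of_mem (mem_subtree_of_mem_sons hj hi))
  rw [Omega, Omega, h i (mem_insert_of_mem hi), h _ (parent_mem_insert_subtree hi)]
  exact congrArg (· + _) (sum_congr rfl fun j hj ↦ by rw [hsons j hj])

lemma exists_pos_supersolution :
    ∃ u : V → ℝ, u T.root = 0 ∧ ∀ i, i ≠ T.root →
      0 < u i ∧ u (T.parent i) < u i ∧ T.lam0 * u i ≤ -T.Omega u i := by
  choose! lam g hlam hg0 hg using fun a (ha : a ≠ T.root) ↦ T.exists_pos_eigenfunction_subtree ha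
  have hagree : ∀ a ∈ T.sons T.root, ∀ j ∈ insert (T.parent a) (T.subtree a),
      ∑ b ∈ T.sons T.root, g b j = g a j := by
    intro a ha j hj
    refine sum_eq_single_of_mem a ha fun b hb hba ↦ hg0 b (mem_sons.1 hb).1 j ?_
    rcases mem_insert.1 hj with rfl | hj
    · rw [(mem_sons.1 ha).2]
      exact root_notMem_subtree (mem_sons.1 hb).1
    · exact notMem_subtree_of_mem_sons_root ha hb (Ne.symm hba) hj
  refine ⟨fun j ↦ ∑ b ∈ T.sons T.root, g b j,
    sum_eq_zero fun b hb ↦ hg0 b (mem_sons.1 hb).1 _ (root_notMem_subtree (mem_sons.1 hb).1),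
    fun i hi ↦ ?_⟩
  obtain ⟨a, ha, hia⟩ := exists_mem_sons_root_mem_subtree hi
  obtain ⟨hpos, hlt, heig⟩ := hg a (mem_sons.1 ha).1 i hia
  dsimp only
  rw [hagree a ha i (mem_insert_of_mem hia), hagree a ha _ (parent_mem_insert_subtree hia),
    T.Omega_congr_subtree hia (hagree a ha), heig]
  exact ⟨hpos, hlt, mul_le_mul_of_nonneg_right (hlam a (mem_sons.1 ha).1) hpos.le⟩

lemma exists_memW_lam0_le_R : ∃ w, T.memW w ∧ ∀ i, i ≠ T.root → T.lam0 ≤ T.R w i := by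
  obtain ⟨u, hu0, hu⟩ := T.exists_pos_supersolution
  refine ⟨fun i ↦ u i / u (T.parent i), fun i hi hp ↦ (one_lt_div (hu _ hp).1).2 (hu i hi).2.1,
    fun i hi ↦ ?_⟩
  have hrel : ∀ j, j ≠ T.root → T.parent j ≠ T.root → u j = u j / u (T.parent j) * u (T.parent j) :=
    fun j _ hp ↦ (div_mul_cancel₀ _ (hu _ hp).1.ne').symm
  obtain ⟨hpos, -, hsuper⟩ := hu i hi
  rw [← T.R_mul_eq_neg_Omega hu0 hrel hi hpos.ne'] at hsuper
  exact le_of_mul_le_mul_right hsuper hpos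

end BDTree

/-- the difference-form lower bound: each `w ∈ W` with `R(w) > 0` gives
`inf R(w) ≤ λ₀`, and `sup_{w∈W} inf_i R_i(w) = λ₀`. -/
theorem stmt18 {V : Type*} [Fintype V] (T : BDTree V) (hne : T.nonroot.Nonempty) :
    (∀ w, T.memW w → (∀ i, i ≠ T.root → 0 < T.R w i) →
      T.nonroot.inf' hne (fun i => T.R w i) ≤ T.lam0) ∧
    sSup {x | ∃ w, T.memW w ∧ x = T.nonroot.inf' hne fun i => T.R w i} = T.lam0 := by
  refine ⟨fun w hw _ ↦ T.inf'_R_le_lam0 hne hw, IsGreatest.csSup_eq ⟨?_, ?_⟩⟩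
  · obtain ⟨w, hw, hR⟩ := T.exists_memW_lam0_le_R
    exact ⟨w, hw, le_antisymm (le_inf' hne _ fun i hi ↦ hR i (BDTree.mem_nonroot.1 hi))
      (T.inf'_R_le_lam0 hne hw)⟩
  · rintro _ ⟨w, hw, rfl⟩
    exact T.inf'_R_le_lam0 hne hw
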